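/- arXiv:1102.0480 — 2 statements merged into one kernel-verified Lean document; each statement's English description precedes it below -/
import Mathlib

section
/- Let u¹, u² ∈ ℝ^{NM} be grid functions, ε > 0, and suppose c ≥ 0 satisfies, for every vector grid function W: |(u¹∘𝔡_x W − 𝔡_x(u¹∘W), W)_𝐏| ≤ c‖W‖_𝐏², |(u²∘𝔡_y W − 𝔡_y(u²∘W), W)_𝐏| ≤ c‖W‖_𝐏², and |(W, C(W))_𝐏| ≤ c‖W‖_𝐏². Suppose the penalty entries satisfy: for all j, (σ'_𝓡)_{(N−1,j)} ≤ min(u¹_{(N−1,j)},0)/2 and (σ'_𝓛)_{(0,j)} ≤ −max(u¹_{(0,j)},0)/2; for all i, (σ'_𝓤)_{(i,M−1)} ≤ min(u²_{(i,M−1)},0)/2 and (σ'_𝓓)_{(i,0)} ≤ −max(u²_{(i,0)},0)/2; for all j, (σ''_𝓡)_{(N−1,j)} ≤ −1/(2pΔx) and (σ''_𝓛)_{(0,j)} ≤ −1/(2pΔx); for all i, (σ''_𝓤)_{(i,M−1)} ≤ −1/(2pΔy) and (σ''_𝓓)_{(i,0)} ≤ −1/(2pΔy); and all other diagonal entries of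 the six Σ matrices are zero. If V : [0,∞) → ℝ^{NM} × ℝ^{NM} is differentiable and satisfies V'(t) = −u¹∘𝔡_x V(t) − u²∘𝔡_y V(t) + C(V(t)) − ε curl²(V(t)) + 𝓑 V(t) for all t ≥ 0, then ‖V(t)‖_𝐏² ≤ e^{4ct} ‖V(0)‖_𝐏² for all t ≥ 0. -/
open Matrix Kronecker

noncomputable section

/-- Scalar grid functions on the `N × M` grid. -/
abbrev Grid (N M : ℕ) := Fin N × Fin M → ℝ

/-- Vector grid functions `V = (V¹, V²)`. -/
abbrev VGrid (N M : ℕ) := Grid N M × Grid N M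

/-- `R_N = diag(0,…,0,1)`. -/
def RmatN (N : ℕ) : Matrix (Fin N) (Fin N) ℝ :=
  Matrix.diagonal (fun i => if (i : ℕ) = N - 1 then 1 else 0)

/-- `L_N = diag(1,0,…,0)`. -/
def LmatN (N : ℕ) : Matrix (Fin N) (Fin N) ℝ :=
  Matrix.diagonal (fun i => if (i : ℕ) = 0 then 1 else 0)

/-- `𝓡 = R_N ⊗ I_M`. -/
def calR (N M : ℕ) : Matrix (Fin N × Fin M) (Fin N × Fin M) ℝ :=
  RmatN N ⊗ₖ (1 : Matrix (Fin M) (Fin M) ℝ)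

/-- `𝓛 = L_N ⊗ I_M`. -/
def calL (N M : ℕ) : Matrix (Fin N × Fin M) (Fin N × Fin M) ℝ :=
  LmatN N ⊗ₖ (1 : Matrix (Fin M) (Fin M) ℝ)

/-- `𝓤 = I_N ⊗ R_M`. -/
def calU (N M : ℕ) : Matrix (Fin N × Fin M) (Fin N × Fin M) ℝ :=
  (1 : Matrix (Fin N) (Fin N) ℝ) ⊗ₖ RmatN M

/-- `𝓓 = I_N ⊗ L_M`. -/
def calD (N M : ℕ) : Matrix (Fin N × Fin M) (Fin N × Fin M) ℝ :=
  (1 : Matrix (Fin N) (Fin N) ℝ) ⊗ₖ LmatN M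

variable {N M : ℕ} (px : Fin N → ℝ) (py : Fin M → ℝ)
variable (Qx : Matrix (Fin N) (Fin N) ℝ) (Qy : Matrix (Fin M) (Fin M) ℝ)

/-- `𝔡_x = (P_x⁻¹ Q_x) ⊗ I_M`. -/
def dgx : Matrix (Fin N × Fin M) (Fin N × Fin M) ℝ :=
  ((Matrix.diagonal px)⁻¹ * Qx) ⊗ₖ (1 : Matrix (Fin M) (Fin M) ℝ)

/-- `𝔡_y = I_N ⊗ (P_y⁻¹ Q_y)`. -/
def dgy : Matrix (Fin N × Fin M) (Fin N × Fin M) ℝ :=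
  (1 : Matrix (Fin N) (Fin N) ℝ) ⊗ₖ ((Matrix.diagonal py)⁻¹ * Qy)

/-- `𝐏 = P_x ⊗ P_y`. -/
def Pmat : Matrix (Fin N × Fin M) (Fin N × Fin M) ℝ :=
  Matrix.diagonal px ⊗ₖ Matrix.diagonal py

/-- The scalar inner product `(v,w)_𝐏 = vᵀ𝐏w`. -/
def ip (v w : Grid N M) : ℝ := v ⬝ᵥ (Pmat px py).mulVec w

/-- The vector inner product `(V,W)_𝐏 = (V¹,W¹)_𝐏 + (V²,W²)_𝐏`. -/
def vip (V W : VGrid N M) : ℝ := ip px py V.1 W.1 + ip px py V.2 W.2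

/-- Discrete curl: `curl(V) = 𝔡_x V² − 𝔡_y V¹`. -/
def curlOp (V : VGrid N M) : Grid N M :=
  (dgx px Qx).mulVec V.2 - (dgy py Qy).mulVec V.1

/-- Discrete curl-curl: `curl²(V) = (−𝔡_y𝔡_y V¹ + 𝔡_x𝔡_y V², 𝔡_x𝔡_y V¹ − 𝔡_x𝔡_x V²)`. -/
def curl2Op (V : VGrid N M) : VGrid N M :=
  (-(dgy py Qy).mulVec ((dgy py Qy).mulVec V.1)
      + (dgx px Qx).mulVec ((dgy py Qy).mulVec V.2),
   (dgx px Qx).mulVec ((dgy py Qy).mulVec V.1)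
      - (dgx px Qx).mulVec ((dgx px Qx).mulVec V.2))

variable (u1 u2 : Grid N M)

/-- The zeroth-order coupling term
`C(W) = (−(𝔡_y u²)∘W¹ + (𝔡_y u¹)∘W², (𝔡_x u²)∘W¹ − (𝔡_x u¹)∘W²)`. -/
def Cop (W : VGrid N M) : VGrid N M :=
  (fun k => -((dgy py Qy).mulVec u2 k) * W.1 k + (dgy py Qy).mulVec u1 k * W.2 k,
   fun k => (dgx px Qx).mulVec u2 k * W.1 k - (dgx px Qx).mulVec u1 k * W.2 k)

/-- The penalty operator
`𝓑 = (P_x⁻¹⊗I_M)(Σ_𝓛𝓛 + Σ_𝓡𝓡) + (I_N⊗P_y⁻¹)(Σ_𝓓𝓓 + Σ_𝓤𝓤)`. -/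
def Bmat (sL sR sD sU : Grid N M) : Matrix (Fin N × Fin M) (Fin N × Fin M) ℝ :=
  ((Matrix.diagonal px)⁻¹ ⊗ₖ (1 : Matrix (Fin M) (Fin M) ℝ)) *
      (Matrix.diagonal sL * calL N M + Matrix.diagonal sR * calR N M)
  + ((1 : Matrix (Fin N) (Fin N) ℝ) ⊗ₖ (Matrix.diagonal py)⁻¹) *
      (Matrix.diagonal sD * calD N M + Matrix.diagonal sU * calU N M)

/-- Right-hand side of the SBP-SAT scheme with Dirichlet-type penalties:
`−u¹∘𝔡_xW − u²∘𝔡_yW + C(W) − ε curl²(W) + 𝓑W`. -/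
def rhsDirichlet (ε : ℝ) (sL sR sD sU : Grid N M) (W : VGrid N M) : VGrid N M :=
  (fun k => -(u1 k * (dgx px Qx).mulVec W.1 k) - u2 k * (dgy py Qy).mulVec W.1 k
      + (Cop px py Qx Qy u1 u2 W).1 k - ε * (curl2Op px py Qx Qy W).1 k
      + (Bmat px py sL sR sD sU).mulVec W.1 k,
   fun k => -(u1 k * (dgx px Qx).mulVec W.2 k) - u2 k * (dgy py Qy).mulVec W.2 k
      + (Cop px py Qx Qy u1 u2 W).2 k - ε * (curl2Op px py Qx Qy W).2 k
      + (Bmat px py sL sR sD sU).mulVec W.2 k)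

section
variable {N M : ℕ} (px : Fin N → ℝ) (py : Fin M → ℝ)
variable (Qx : Matrix (Fin N) (Fin N) ℝ) (Qy : Matrix (Fin M) (Fin M) ℝ)

lemma diag_inv_eq {K : ℕ} (v : Fin K → ℝ) (hv : ∀ i, v i ≠ 0) :
    (Matrix.diagonal v)⁻¹ = Matrix.diagonal (fun i => (v i)⁻¹) := by
  apply Matrix.inv_eq_right_inv
  rw [Matrix.diagonal_mul_diagonal]
  convert Matrix.diagonal_one with i
  exact mul_inv_cancel₀ (hv i)

lemma ip_eq (v w : Grid N M) :
    ip px py v w = ∑ k : Fin N × Fin M, px k.1 * py k.2 * (v k * w k) := by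
  simp [ip, Pmat, Matrix.diagonal_kronecker_diagonal, Matrix.mulVec_diagonal,
    dotProduct, mul_comm, mul_assoc, mul_left_comm]

lemma dgx_apply (hpx : ∀ i, px i ≠ 0) (w : Grid N M) (k : Fin N × Fin M) :
    (dgx px Qx).mulVec w k = (px k.1)⁻¹ * ∑ i', Qx k.1 i' * w (i', k.2) := by
  simp only [dgx, Matrix.mulVec, dotProduct, diag_inv_eq px hpx]
  rw [Fintype.sum_prod_type]
  simp only [Matrix.kroneckerMap_apply, Matrix.diagonal_mul,
    Matrix.one_apply, mul_ite, mul_one, mul_zero,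
    ite_mul, zero_mul, Finset.sum_ite_eq, Finset.mem_univ, if_true, Finset.mul_sum]
  exact Finset.sum_congr rfl fun i _ => by ring

lemma dgy_apply (hpy : ∀ j, py j ≠ 0) (w : Grid N M) (k : Fin N × Fin M) :
    (dgy py Qy).mulVec w k = (py k.2)⁻¹ * ∑ j', Qy k.2 j' * w (k.1, j') := by
  simp only [dgy, Matrix.mulVec, dotProduct, diag_inv_eq py hpy]
  rw [Fintype.sum_prod_type]
  simp only [Matrix.kroneckerMap_apply, Matrix.diagonal_mul,
    Matrix.one_apply, mul_ite, mul_one, mul_zero,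
    ite_mul, zero_mul, Finset.sum_ite_eq, Finset.mem_univ, if_true, Finset.mul_sum]
  rw [Finset.sum_comm]
  simp only [Finset.sum_ite_eq, Finset.mem_univ, if_true, Finset.mul_sum]
  exact Finset.sum_congr rfl fun j _ => by ring

end
section
variable {N M : ℕ} (px : Fin N → ℝ) (py : Fin M → ℝ)
variable (Qx : Matrix (Fin N) (Fin N) ℝ) (Qy : Matrix (Fin M) (Fin M) ℝ)

/-- boundary indicator in x -/
def bx (N : ℕ) (i : Fin N) : ℝ :=
  (if (i : ℕ) = N - 1 then 1 else 0) - (if (i : ℕ) = 0 then 1 else 0)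

lemma sbp_x (hpx : ∀ i, px i ≠ 0) (hQx : Qx + Qxᵀ = RmatN N - LmatN N) (v w : Grid N M) :
    ip px py v ((dgx px Qx).mulVec w) + ip px py ((dgx px Qx).mulVec v) w
    = ∑ k : Fin N × Fin M, py k.2 * (bx N k.1 * (v k * w k)) := by
  have hQ : ∀ i i' : Fin N, Qx i i' + Qx i' i = if i' = i then bx N i else 0 := by
    intro i i'
    have h := congrFun (congrFun hQx i) i'
    simp only [Matrix.add_apply, Matrix.transpose_apply, RmatN, LmatN, Matrix.sub_apply,
      Matrix.diagonal_apply, bx] at h ⊢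
    rcases eq_or_ne i i' with rfl | hne
    · split_ifs at h ⊢ <;> simp_all <;> linarith
    · split_ifs at h ⊢ <;> simp_all <;> linarith
  have e1 : ip px py v ((dgx px Qx).mulVec w)
      = ∑ i, ∑ i', ∑ j, py j * (Qx i i' * (v (i, j) * w (i', j))) := by
    rw [ip_eq, Fintype.sum_prod_type]
    refine Finset.sum_congr rfl fun i _ => ?_
    rw [Finset.sum_comm]
    refine Finset.sum_congr rfl fun j _ => ?_
    simp only [dgx_apply px Qx hpx, Finset.mul_sum, Finset.sum_mul]
    refine Finset.sum_congr rfl fun i' _ => ?_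
    field_simp [hpx i]
  have e2 : ip px py ((dgx px Qx).mulVec v) w
      = ∑ i, ∑ i', ∑ j, py j * (Qx i i' * (v (i', j) * w (i, j))) := by
    rw [ip_eq, Fintype.sum_prod_type]
    refine Finset.sum_congr rfl fun i _ => ?_
    rw [Finset.sum_comm]
    refine Finset.sum_congr rfl fun j _ => ?_
    simp only [dgx_apply px Qx hpx, Finset.mul_sum, Finset.sum_mul]
    refine Finset.sum_congr rfl fun i' _ => ?_
    field_simp [hpx i]
  have e2' : (∑ i, ∑ i', ∑ j, py j * (Qx i i' * (v (i', j) * w (i, j))))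
      = ∑ i, ∑ i', ∑ j, py j * (Qx i' i * (v (i, j) * w (i', j))) :=
    Finset.sum_comm (f := fun i i' => ∑ j, py j * (Qx i i' * (v (i', j) * w (i, j))))
  rw [e1, e2, e2', ← Finset.sum_add_distrib, Fintype.sum_prod_type]
  refine Finset.sum_congr rfl fun i _ => ?_
  rw [← Finset.sum_add_distrib]
  have key : ∀ i' : Fin N, (∑ j, py j * (Qx i i' * (v (i, j) * w (i', j))))
      + (∑ j, py j * (Qx i' i * (v (i, j) * w (i', j))))
      = if i' = i then ∑ j, py j * (bx N i * (v (i, j) * w (i, j))) else 0 := by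
    intro i'
    rw [← Finset.sum_add_distrib]
    rcases eq_or_ne i' i with rfl | hne
    · rw [if_pos rfl]
      refine Finset.sum_congr rfl fun j _ => ?_
      have h := hQ i' i'
      rw [if_pos rfl] at h
      linear_combination (py j * (v (i', j) * w (i', j))) * h
    · rw [if_neg hne]
      refine Finset.sum_eq_zero fun j _ => ?_
      have h := hQ i i'
      rw [if_neg hne] at h
      linear_combination (py j * (v (i, j) * w (i', j))) * h
  rw [Finset.sum_congr rfl fun i' _ => key i']
  simp
end
section
variable {N M : ℕ} (px : Fin N → ℝ) (py : Fin M → ℝ)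
variable (Qx : Matrix (Fin N) (Fin N) ℝ) (Qy : Matrix (Fin M) (Fin M) ℝ)

/-- boundary indicator in y -/
def by_ (M : ℕ) (j : Fin M) : ℝ :=
  (if (j : ℕ) = M - 1 then 1 else 0) - (if (j : ℕ) = 0 then 1 else 0)

lemma sbp_y (hpy : ∀ j, py j ≠ 0) (hQy : Qy + Qyᵀ = RmatN M - LmatN M) (v w : Grid N M) :
    ip px py v ((dgy py Qy).mulVec w) + ip px py ((dgy py Qy).mulVec v) w
    = ∑ k : Fin N × Fin M, px k.1 * (by_ M k.2 * (v k * w k)) := by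
  have hQ : ∀ j j' : Fin M, Qy j j' + Qy j' j = if j' = j then by_ M j else 0 := by
    intro j j'
    have h := congrFun (congrFun hQy j) j'
    simp only [Matrix.add_apply, Matrix.transpose_apply, RmatN, LmatN, Matrix.sub_apply,
      Matrix.diagonal_apply, by_] at h ⊢
    rcases eq_or_ne j j' with rfl | hne
    · split_ifs at h ⊢ <;> simp_all
    · split_ifs at h ⊢ <;> simp_all
  have e1 : ip px py v ((dgy py Qy).mulVec w)
      = ∑ j, ∑ j', ∑ i, px i * (Qy j j' * (v (i, j) * w (i, j'))) := by
    rw [ip_eq, Fintype.sum_prod_type, Finset.sum_comm]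
    refine Finset.sum_congr rfl fun j _ => ?_
    rw [Finset.sum_comm]
    refine Finset.sum_congr rfl fun i _ => ?_
    simp only [dgy_apply py Qy hpy, Finset.mul_sum, Finset.sum_mul]
    refine Finset.sum_congr rfl fun j' _ => ?_
    field_simp [hpy j]
  have e2 : ip px py ((dgy py Qy).mulVec v) w
      = ∑ j, ∑ j', ∑ i, px i * (Qy j j' * (v (i, j') * w (i, j))) := by
    rw [ip_eq, Fintype.sum_prod_type, Finset.sum_comm]
    refine Finset.sum_congr rfl fun j _ => ?_
    rw [Finset.sum_comm]
    refine Finset.sum_congr rfl fun i _ => ?_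
    simp only [dgy_apply py Qy hpy, Finset.mul_sum, Finset.sum_mul]
    refine Finset.sum_congr rfl fun j' _ => ?_
    field_simp [hpy j]
  have e2' : (∑ j, ∑ j', ∑ i, px i * (Qy j j' * (v (i, j') * w (i, j))))
      = ∑ j, ∑ j', ∑ i, px i * (Qy j' j * (v (i, j) * w (i, j'))) :=
    Finset.sum_comm (f := fun j j' => ∑ i, px i * (Qy j j' * (v (i, j') * w (i, j))))
  rw [e1, e2, e2', ← Finset.sum_add_distrib]
  rw [Fintype.sum_prod_type, Finset.sum_comm]
  refine Finset.sum_congr rfl fun j _ => ?_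
  rw [← Finset.sum_add_distrib]
  have key : ∀ j' : Fin M, (∑ i, px i * (Qy j j' * (v (i, j) * w (i, j'))))
      + (∑ i, px i * (Qy j' j * (v (i, j) * w (i, j'))))
      = if j' = j then ∑ i, px i * (by_ M j * (v (i, j) * w (i, j))) else 0 := by
    intro j'
    rw [← Finset.sum_add_distrib]
    rcases eq_or_ne j' j with rfl | hne
    · rw [if_pos rfl]
      refine Finset.sum_congr rfl fun i _ => ?_
      have h := hQ j' j'
      rw [if_pos rfl] at h
      linear_combination (px i * (v (i, j') * w (i, j'))) * h
    · rw [if_neg hne]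
      refine Finset.sum_eq_zero fun i _ => ?_
      have h := hQ j j'
      rw [if_neg hne] at h
      linear_combination (px i * (v (i, j) * w (i, j'))) * h
  rw [Finset.sum_congr rfl fun j' _ => key j']
  simp

lemma dg_comm (w : Grid N M) :
    (dgx px Qx).mulVec ((dgy py Qy).mulVec w) = (dgy py Qy).mulVec ((dgx px Qx).mulVec w) := by
  rw [Matrix.mulVec_mulVec, Matrix.mulVec_mulVec]
  congr 1
  rw [dgx, dgy, ← Matrix.mul_kronecker_mul, ← Matrix.mul_kronecker_mul, Matrix.mul_one,
    Matrix.one_mul, Matrix.mul_one, Matrix.one_mul]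
end
section
variable {N M : ℕ} (px : Fin N → ℝ) (py : Fin M → ℝ)

lemma Bmat_eq (hpx : ∀ i, px i ≠ 0) (hpy : ∀ j, py j ≠ 0) (sL sR sD sU : Grid N M) :
    Bmat px py sL sR sD sU = Matrix.diagonal (fun k : Fin N × Fin M =>
      (px k.1)⁻¹ * (sL k * (if (k.1 : ℕ) = 0 then 1 else 0)
          + sR k * (if (k.1 : ℕ) = N - 1 then 1 else 0))
      + (py k.2)⁻¹ * (sD k * (if (k.2 : ℕ) = 0 then 1 else 0)
          + sU k * (if (k.2 : ℕ) = M - 1 then 1 else 0))) := by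
  have h1 : (Matrix.diagonal px)⁻¹ ⊗ₖ (1 : Matrix (Fin M) (Fin M) ℝ)
      = Matrix.diagonal (fun k : Fin N × Fin M => (px k.1)⁻¹) := by
    rw [diag_inv_eq px hpx, ← Matrix.diagonal_one, Matrix.diagonal_kronecker_diagonal]
    simp
  have h2 : (1 : Matrix (Fin N) (Fin N) ℝ) ⊗ₖ (Matrix.diagonal py)⁻¹
      = Matrix.diagonal (fun k : Fin N × Fin M => (py k.2)⁻¹) := by
    rw [diag_inv_eq py hpy, ← Matrix.diagonal_one, Matrix.diagonal_kronecker_diagonal]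
    simp
  have h3 : calL N M = Matrix.diagonal (fun k : Fin N × Fin M =>
      if (k.1 : ℕ) = 0 then (1:ℝ) else 0) := by
    rw [calL, LmatN, ← Matrix.diagonal_one, Matrix.diagonal_kronecker_diagonal]
    congr 1; funext k; simp
  have h4 : calR N M = Matrix.diagonal (fun k : Fin N × Fin M =>
      if (k.1 : ℕ) = N - 1 then (1:ℝ) else 0) := by
    rw [calR, RmatN, ← Matrix.diagonal_one, Matrix.diagonal_kronecker_diagonal]
    congr 1; funext k; simp
  have h5 : calD N M = Matrix.diagonal (fun k : Fin N × Fin M =>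
      if (k.2 : ℕ) = 0 then (1:ℝ) else 0) := by
    rw [calD, LmatN, ← Matrix.diagonal_one, Matrix.diagonal_kronecker_diagonal]
    congr 1; funext k; simp
  have h6 : calU N M = Matrix.diagonal (fun k : Fin N × Fin M =>
      if (k.2 : ℕ) = M - 1 then (1:ℝ) else 0) := by
    rw [calU, RmatN, ← Matrix.diagonal_one, Matrix.diagonal_kronecker_diagonal]
    congr 1; funext k; simp
  rw [Bmat, h1, h2, h3, h4, h5, h6]
  simp only [Matrix.mul_add, Matrix.diagonal_mul_diagonal]
  ext k k'
  simp only [Matrix.add_apply, Matrix.diagonal_apply]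
  split_ifs <;> ring

lemma ip_B (hpx : ∀ i, px i ≠ 0) (hpy : ∀ j, py j ≠ 0) (sL sR sD sU : Grid N M)
    (v w : Grid N M) :
    ip px py v ((Bmat px py sL sR sD sU).mulVec w)
    = ∑ k : Fin N × Fin M,
        (py k.2 * (sL k * (if (k.1 : ℕ) = 0 then 1 else 0)
            + sR k * (if (k.1 : ℕ) = N - 1 then 1 else 0))
          + px k.1 * (sD k * (if (k.2 : ℕ) = 0 then 1 else 0)
            + sU k * (if (k.2 : ℕ) = M - 1 then 1 else 0))) * (v k * w k) := by
  rw [Bmat_eq px py hpx hpy, ip_eq]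
  refine Finset.sum_congr rfl fun k _ => ?_
  rw [Matrix.mulVec_diagonal]
  field_simp [hpx k.1, hpy k.2]

lemma ip_sub (v a b : Grid N M) :
    ip px py (fun k => a k - b k) v = ip px py a v - ip px py b v := by
  simp only [ip_eq, ← Finset.sum_sub_distrib]
  exact Finset.sum_congr rfl fun k _ => by ring

lemma ip_swap_mul (u v w : Grid N M) :
    ip px py v (fun k => u k * w k) = ip px py (fun k => u k * v k) w := by
  simp only [ip_eq]
  exact Finset.sum_congr rfl fun k _ => by ring
end
section
variable {N M : ℕ} (px : Fin N → ℝ) (py : Fin M → ℝ)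
lemma ip_comm (v w : Grid N M) : ip px py v w = ip px py w v := by
  simp only [ip_eq]; exact Finset.sum_congr rfl fun k _ => by ring
lemma ip_neg_fun (v w : Grid N M) : ip px py v (fun k => -(w k)) = -ip px py v w := by
  simp only [ip_eq, ← Finset.sum_neg_distrib]
  exact Finset.sum_congr rfl fun k _ => by ring
end
lemma side_bound {ε q u s' s'' a b f : ℝ} (hε : 0 < ε) (hq : 0 < q)
    (hs' : s' ≤ min u 0 / 2) (hs'' : s'' ≤ -1 / (2 * q)) :
    (s' + ε * s'' - u / 2) * (a * a + b * b) + ε * (b * f) ≤ ε * (q / 2) * (f * f) := by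
  have h1 : s' - u / 2 ≤ 0 := by
    rcases le_or_gt u 0 with h | h
    · rw [min_eq_left h] at hs'; linarith
    · rw [min_eq_right h.le] at hs'; linarith
  have h2 : (s' - u / 2) * (a * a + b * b) ≤ 0 :=
    mul_nonpos_of_nonpos_of_nonneg h1 (by nlinarith [sq_nonneg a, sq_nonneg b])
  have h3 : ε * s'' * (a * a + b * b) ≤ ε * (-1 / (2 * q)) * (b * b) := by
    have hb : ε * s'' ≤ ε * (-1 / (2 * q)) := by
      apply mul_le_mul_of_nonneg_left hs'' hε.le
    have hq2 : (0:ℝ) < 2 * q := by linarith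
    have hneg : (-1 : ℝ) / (2 * q) ≤ 0 := div_nonpos_of_nonpos_of_nonneg (by norm_num) hq2.le
    have hb0 : ε * s'' ≤ 0 := hb.trans (by nlinarith)
    have ha2 : 0 ≤ a * a := mul_self_nonneg a
    have hb2 : 0 ≤ b * b := mul_self_nonneg b
    nlinarith [mul_le_mul_of_nonneg_right hb hb2, mul_nonpos_of_nonpos_of_nonneg hb0 ha2]
  have h4 : ε * (-1 / (2 * q)) * (b * b) + ε * (b * f) - ε * (q / 2) * (f * f)
      = -(ε / (2 * q)) * (b - q * f) ^ 2 := by field_simp; ring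
  nlinarith [sq_nonneg (b - q * f), div_pos hε (by linarith : (0:ℝ) < 2 * q)]
lemma node_bound {N M : ℕ} (hN : 2 ≤ N) (hM : 2 ≤ M) (i : Fin N) (j : Fin M)
    {dx dy p ε : ℝ} (hdx : 0 < dx) (hdy : 0 < dy) (hp : 0 < p) (hε : 0 < ε)
    {X Y : ℝ} (hX : 0 < X) (hY : 0 < Y)
    (hYR : (i : ℕ) = N - 1 → Y = dx * p) (hYL : (i : ℕ) = 0 → Y = dx * p)
    (hXU : (j : ℕ) = M - 1 → X = dy * p) (hXD : (j : ℕ) = 0 → X = dy * p)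
    {u1k u2k sL' sL'' sR' sR'' sD' sD'' sU' sU'' a b f : ℝ}
    (hR' : (i : ℕ) = N - 1 → sR' ≤ min u1k 0 / 2)
    (hR'' : (i : ℕ) = N - 1 → sR'' ≤ -1 / (2 * p * dx))
    (hL' : (i : ℕ) = 0 → sL' ≤ -(max u1k 0) / 2)
    (hL'' : (i : ℕ) = 0 → sL'' ≤ -1 / (2 * p * dx))
    (hU' : (j : ℕ) = M - 1 → sU' ≤ min u2k 0 / 2)
    (hU'' : (j : ℕ) = M - 1 → sU'' ≤ -1 / (2 * p * dy))
    (hD' : (j : ℕ) = 0 → sD' ≤ -(max u2k 0) / 2)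
    (hD'' : (j : ℕ) = 0 → sD'' ≤ -1 / (2 * p * dy)) :
    -(1/2) * (X * (bx N i * (u1k * (a * a + b * b))))
    - (1/2) * (Y * (by_ M j * (u2k * (a * a + b * b))))
    - ε * (Y * X * (f * f))
    - ε * (Y * (by_ M j * (a * f)))
    + ε * (X * (bx N i * (b * f)))
    + (X * ((sL' + ε * sL'') * (if (i : ℕ) = 0 then 1 else 0)
        + (sR' + ε * sR'') * (if (i : ℕ) = N - 1 then 1 else 0))
      + Y * ((sD' + ε * sD'') * (if (j : ℕ) = 0 then 1 else 0)
        + (sU' + ε * sU'') * (if (j : ℕ) = M - 1 then 1 else 0))) * (a * a + b * b)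
    ≤ 0 := by
  have hpdx : (0:ℝ) < p * dx := mul_pos hp hdx
  have hpdy : (0:ℝ) < p * dy := mul_pos hp hdy
  have hff : 0 ≤ Y * X * (f * f) := mul_nonneg (mul_pos hY hX).le (mul_self_nonneg f)
  have hSX : -(1/2) * (X * (bx N i * (u1k * (a * a + b * b))))
      + ε * (X * (bx N i * (b * f)))
      + X * ((sL' + ε * sL'') * (if (i : ℕ) = 0 then 1 else 0)
          + (sR' + ε * sR'') * (if (i : ℕ) = N - 1 then 1 else 0)) * (a * a + b * b)
      ≤ (1/2) * (ε * (Y * X * (f * f))) := by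
    by_cases hiR : (i : ℕ) = N - 1
    · have hiL : (i : ℕ) ≠ 0 := by omega
      have hq : sR'' ≤ -1 / (2 * (p * dx)) := by
        have := hR'' hiR; rw [show 2 * (p * dx) = 2 * p * dx by ring]; exact this
      have SB := side_bound (u := u1k) (a := a) (b := b) (f := f) hε hpdx (hR' hiR) hq
      have := mul_le_mul_of_nonneg_left SB hX.le
      rw [bx, if_pos hiR, if_neg hiL, hYR hiR]
      linarith [this]
    · by_cases hiL : (i : ℕ) = 0
      · have hs' : sL' ≤ min (-u1k) 0 / 2 := by
          have h := hL' hiL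
          have : min (-u1k) 0 = -(max u1k 0) := by
            rw [← neg_zero, min_neg_neg, neg_zero]
          rw [this]; linarith
        have hq : sL'' ≤ -1 / (2 * (p * dx)) := by
          have := hL'' hiL; rw [show 2 * (p * dx) = 2 * p * dx by ring]; exact this
        have SB := side_bound (u := -u1k) (a := a) (b := -b) (f := f) hε hpdx hs' hq
        have := mul_le_mul_of_nonneg_left SB hX.le
        rw [bx, if_neg hiR, if_pos hiL, hYL hiL]
        linarith [this]
      · rw [bx, if_neg hiR, if_neg hiL]
        linarith [mul_nonneg hε.le hff]
  have hSY : -(1/2) * (Y * (by_ M j * (u2k * (a * a + b * b))))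
      - ε * (Y * (by_ M j * (a * f)))
      + Y * ((sD' + ε * sD'') * (if (j : ℕ) = 0 then 1 else 0)
          + (sU' + ε * sU'') * (if (j : ℕ) = M - 1 then 1 else 0)) * (a * a + b * b)
      ≤ (1/2) * (ε * (Y * X * (f * f))) := by
    by_cases hjU : (j : ℕ) = M - 1
    · have hjD : (j : ℕ) ≠ 0 := by omega
      have hq : sU'' ≤ -1 / (2 * (p * dy)) := by
        have := hU'' hjU; rw [show 2 * (p * dy) = 2 * p * dy by ring]; exact this
      have SB := side_bound (u := u2k) (a := b) (b := -a) (f := f) hε hpdy (hU' hjU) hq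
      have := mul_le_mul_of_nonneg_left SB hY.le
      rw [by_, if_pos hjU, if_neg hjD, hXU hjU]
      linarith [this]
    · by_cases hjD : (j : ℕ) = 0
      · have hs' : sD' ≤ min (-u2k) 0 / 2 := by
          have h := hD' hjD
          have : min (-u2k) 0 = -(max u2k 0) := by
            rw [← neg_zero, min_neg_neg, neg_zero]
          rw [this]; linarith
        have hq : sD'' ≤ -1 / (2 * (p * dy)) := by
          have := hD'' hjD; rw [show 2 * (p * dy) = 2 * p * dy by ring]; exact this
        have SB := side_bound (u := -u2k) (a := b) (b := a) (f := f) hε hpdy hs' hq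
        have := mul_le_mul_of_nonneg_left SB hY.le
        rw [by_, if_neg hjU, if_pos hjD, hXD hjD]
        linarith [this]
      · rw [by_, if_neg hjU, if_neg hjD]
        linarith [mul_nonneg hε.le hff]
  linarith [hSX, hSY, mul_nonneg hε.le hff]
lemma energy_est {N M : ℕ} (hN : 2 ≤ N) (hM : 2 ≤ M)
    (dx dy p : ℝ) (hdx : 0 < dx) (hdy : 0 < dy) (hp : 0 < p)
    (PX : Fin N → ℝ) (hPX : ∀ i, 0 < PX i)
    (PY : Fin M → ℝ) (hPY : ∀ j, 0 < PY j)
    (hbR : ∀ i : Fin N, (i : ℕ) = N - 1 → PX i = dx * p)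
    (hbL : ∀ i : Fin N, (i : ℕ) = 0 → PX i = dx * p)
    (hbU : ∀ j : Fin M, (j : ℕ) = M - 1 → PY j = dy * p)
    (hbD : ∀ j : Fin M, (j : ℕ) = 0 → PY j = dy * p)
    (Qx : Matrix (Fin N) (Fin N) ℝ) (hQx : Qx + Qxᵀ = RmatN N - LmatN N)
    (Qy : Matrix (Fin M) (Fin M) ℝ) (hQy : Qy + Qyᵀ = RmatN M - LmatN M)
    (u1 u2 : Grid N M) (ε : ℝ) (hε : 0 < ε) (c : ℝ) (hc : 0 ≤ c)
    (sL' sR' sD' sU' sL'' sR'' sD'' sU'' : Grid N M)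
    (hsR' : ∀ k : Fin N × Fin M, (k.1 : ℕ) = N - 1 → sR' k ≤ min (u1 k) 0 / 2)
    (hsL' : ∀ k : Fin N × Fin M, (k.1 : ℕ) = 0 → sL' k ≤ -(max (u1 k) 0) / 2)
    (hsU' : ∀ k : Fin N × Fin M, (k.2 : ℕ) = M - 1 → sU' k ≤ min (u2 k) 0 / 2)
    (hsD' : ∀ k : Fin N × Fin M, (k.2 : ℕ) = 0 → sD' k ≤ -(max (u2 k) 0) / 2)
    (hsR'' : ∀ k : Fin N × Fin M, (k.1 : ℕ) = N - 1 → sR'' k ≤ -1 / (2 * p * dx))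
    (hsL'' : ∀ k : Fin N × Fin M, (k.1 : ℕ) = 0 → sL'' k ≤ -1 / (2 * p * dx))
    (hsU'' : ∀ k : Fin N × Fin M, (k.2 : ℕ) = M - 1 → sU'' k ≤ -1 / (2 * p * dy))
    (hsD'' : ∀ k : Fin N × Fin M, (k.2 : ℕ) = 0 → sD'' k ≤ -1 / (2 * p * dy))
    (W : VGrid N M)
    (hK1 : |vip PX PY
        (fun k => u1 k * (dgx PX Qx).mulVec W.1 k
            - (dgx PX Qx).mulVec (fun l => u1 l * W.1 l) k,
         fun k => u1 k * (dgx PX Qx).mulVec W.2 k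
            - (dgx PX Qx).mulVec (fun l => u1 l * W.2 l) k) W|
        ≤ c * vip PX PY W W)
    (hK2 : |vip PX PY
        (fun k => u2 k * (dgy PY Qy).mulVec W.1 k
            - (dgy PY Qy).mulVec (fun l => u2 l * W.1 l) k,
         fun k => u2 k * (dgy PY Qy).mulVec W.2 k
            - (dgy PY Qy).mulVec (fun l => u2 l * W.2 l) k) W|
        ≤ c * vip PX PY W W)
    (hK3 : |vip PX PY W (Cop PX PY Qx Qy u1 u2 W)| ≤ c * vip PX PY W W) :
    vip PX PY W (rhsDirichlet PX PY Qx Qy u1 u2 ε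
        (fun k => sL' k + ε * sL'' k) (fun k => sR' k + ε * sR'' k)
        (fun k => sD' k + ε * sD'' k) (fun k => sU' k + ε * sU'' k) W)
      ≤ 2 * c * vip PX PY W W := by
  have hPXne : ∀ i, PX i ≠ 0 := fun i => (hPX i).ne'
  have hPYne : ∀ j, PY j ≠ 0 := fun j => (hPY j).ne'
  set φ : Grid N M :=
    fun k => (dgx PX Qx).mulVec W.2 k - (dgy PY Qy).mulVec W.1 k with hφ
  -- split into the five pieces
  have split : vip PX PY W (rhsDirichlet PX PY Qx Qy u1 u2 ε
        (fun k => sL' k + ε * sL'' k) (fun k => sR' k + ε * sR'' k)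
        (fun k => sD' k + ε * sD'' k) (fun k => sU' k + ε * sU'' k) W)
      = -(ip PX PY W.1 (fun k => u1 k * (dgx PX Qx).mulVec W.1 k)
            + ip PX PY W.2 (fun k => u1 k * (dgx PX Qx).mulVec W.2 k))
        - (ip PX PY W.1 (fun k => u2 k * (dgy PY Qy).mulVec W.1 k)
            + ip PX PY W.2 (fun k => u2 k * (dgy PY Qy).mulVec W.2 k))
        + vip PX PY W (Cop PX PY Qx Qy u1 u2 W)
        - ε * (ip PX PY W.1 (curl2Op PX PY Qx Qy W).1
            + ip PX PY W.2 (curl2Op PX PY Qx Qy W).2)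
        + (ip PX PY W.1 ((Bmat PX PY (fun k => sL' k + ε * sL'' k)
              (fun k => sR' k + ε * sR'' k) (fun k => sD' k + ε * sD'' k)
              (fun k => sU' k + ε * sU'' k)).mulVec W.1)
          + ip PX PY W.2 ((Bmat PX PY (fun k => sL' k + ε * sL'' k)
              (fun k => sR' k + ε * sR'' k) (fun k => sD' k + ε * sD'' k)
              (fun k => sU' k + ε * sU'' k)).mulVec W.2)) := by
    simp only [vip, rhsDirichlet, ip_eq, Finset.mul_sum, sub_eq_add_neg,
      ← Finset.sum_neg_distrib, ← Finset.sum_add_distrib]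
    exact Finset.sum_congr rfl fun k _ => by ring

  -- x-advection commutator split
  have s1 : ip PX PY (fun l => u1 l * W.1 l) ((dgx PX Qx).mulVec W.1)
      + ip PX PY ((dgx PX Qx).mulVec (fun l => u1 l * W.1 l)) W.1
      = ∑ k : Fin N × Fin M, PY k.2 * (bx N k.1 * ((u1 k * W.1 k) * W.1 k)) :=
    sbp_x PX PY Qx hPXne hQx _ _
  have s2 : ip PX PY (fun l => u1 l * W.2 l) ((dgx PX Qx).mulVec W.2)
      + ip PX PY ((dgx PX Qx).mulVec (fun l => u1 l * W.2 l)) W.2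
      = ∑ k : Fin N × Fin M, PY k.2 * (bx N k.1 * ((u1 k * W.2 k) * W.2 k)) :=
    sbp_x PX PY Qx hPXne hQx _ _
  have sw1 : ip PX PY W.1 (fun k => u1 k * (dgx PX Qx).mulVec W.1 k)
      = ip PX PY (fun l => u1 l * W.1 l) ((dgx PX Qx).mulVec W.1) := ip_swap_mul PX PY _ _ _
  have sw2 : ip PX PY W.2 (fun k => u1 k * (dgx PX Qx).mulVec W.2 k)
      = ip PX PY (fun l => u1 l * W.2 l) ((dgx PX Qx).mulVec W.2) := ip_swap_mul PX PY _ _ _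
  have sb1 : ip PX PY (fun k => u1 k * (dgx PX Qx).mulVec W.1 k
        - (dgx PX Qx).mulVec (fun l => u1 l * W.1 l) k) W.1
      = ip PX PY (fun k => u1 k * (dgx PX Qx).mulVec W.1 k) W.1
        - ip PX PY ((dgx PX Qx).mulVec (fun l => u1 l * W.1 l)) W.1 := ip_sub PX PY _ _ _
  have sb2 : ip PX PY (fun k => u1 k * (dgx PX Qx).mulVec W.2 k
        - (dgx PX Qx).mulVec (fun l => u1 l * W.2 l) k) W.2
      = ip PX PY (fun k => u1 k * (dgx PX Qx).mulVec W.2 k) W.2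
        - ip PX PY ((dgx PX Qx).mulVec (fun l => u1 l * W.2 l)) W.2 := ip_sub PX PY _ _ _
  have cm1 : ip PX PY (fun k => u1 k * (dgx PX Qx).mulVec W.1 k) W.1
      = ip PX PY W.1 (fun k => u1 k * (dgx PX Qx).mulVec W.1 k) := ip_comm PX PY _ _
  have cm2 : ip PX PY (fun k => u1 k * (dgx PX Qx).mulVec W.2 k) W.2
      = ip PX PY W.2 (fun k => u1 k * (dgx PX Qx).mulVec W.2 k) := ip_comm PX PY _ _
  have hsum1 : (∑ k : Fin N × Fin M, PY k.2 * (bx N k.1 * ((u1 k * W.1 k) * W.1 k)))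
      + (∑ k : Fin N × Fin M, PY k.2 * (bx N k.1 * ((u1 k * W.2 k) * W.2 k)))
      = ∑ k : Fin N × Fin M, PY k.2 * (bx N k.1 * (u1 k * (W.1 k * W.1 k + W.2 k * W.2 k))) := by
    rw [← Finset.sum_add_distrib]; exact Finset.sum_congr rfl fun k _ => by ring
  -- y-advection commutator split
  have t1 : ip PX PY (fun l => u2 l * W.1 l) ((dgy PY Qy).mulVec W.1)
      + ip PX PY ((dgy PY Qy).mulVec (fun l => u2 l * W.1 l)) W.1
      = ∑ k : Fin N × Fin M, PX k.1 * (by_ M k.2 * ((u2 k * W.1 k) * W.1 k)) :=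
    sbp_y PX PY Qy hPYne hQy _ _
  have t2 : ip PX PY (fun l => u2 l * W.2 l) ((dgy PY Qy).mulVec W.2)
      + ip PX PY ((dgy PY Qy).mulVec (fun l => u2 l * W.2 l)) W.2
      = ∑ k : Fin N × Fin M, PX k.1 * (by_ M k.2 * ((u2 k * W.2 k) * W.2 k)) :=
    sbp_y PX PY Qy hPYne hQy _ _
  have tw1 : ip PX PY W.1 (fun k => u2 k * (dgy PY Qy).mulVec W.1 k)
      = ip PX PY (fun l => u2 l * W.1 l) ((dgy PY Qy).mulVec W.1) := ip_swap_mul PX PY _ _ _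
  have tw2 : ip PX PY W.2 (fun k => u2 k * (dgy PY Qy).mulVec W.2 k)
      = ip PX PY (fun l => u2 l * W.2 l) ((dgy PY Qy).mulVec W.2) := ip_swap_mul PX PY _ _ _
  have tb1 : ip PX PY (fun k => u2 k * (dgy PY Qy).mulVec W.1 k
        - (dgy PY Qy).mulVec (fun l => u2 l * W.1 l) k) W.1
      = ip PX PY (fun k => u2 k * (dgy PY Qy).mulVec W.1 k) W.1
        - ip PX PY ((dgy PY Qy).mulVec (fun l => u2 l * W.1 l)) W.1 := ip_sub PX PY _ _ _
  have tb2 : ip PX PY (fun k => u2 k * (dgy PY Qy).mulVec W.2 k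
        - (dgy PY Qy).mulVec (fun l => u2 l * W.2 l) k) W.2
      = ip PX PY (fun k => u2 k * (dgy PY Qy).mulVec W.2 k) W.2
        - ip PX PY ((dgy PY Qy).mulVec (fun l => u2 l * W.2 l)) W.2 := ip_sub PX PY _ _ _
  have tm1 : ip PX PY (fun k => u2 k * (dgy PY Qy).mulVec W.1 k) W.1
      = ip PX PY W.1 (fun k => u2 k * (dgy PY Qy).mulVec W.1 k) := ip_comm PX PY _ _
  have tm2 : ip PX PY (fun k => u2 k * (dgy PY Qy).mulVec W.2 k) W.2
      = ip PX PY W.2 (fun k => u2 k * (dgy PY Qy).mulVec W.2 k) := ip_comm PX PY _ _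
  have hsum2 : (∑ k : Fin N × Fin M, PX k.1 * (by_ M k.2 * ((u2 k * W.1 k) * W.1 k)))
      + (∑ k : Fin N × Fin M, PX k.1 * (by_ M k.2 * ((u2 k * W.2 k) * W.2 k)))
      = ∑ k : Fin N × Fin M, PX k.1 * (by_ M k.2 * (u2 k * (W.1 k * W.1 k + W.2 k * W.2 k))) := by
    rw [← Finset.sum_add_distrib]; exact Finset.sum_congr rfl fun k _ => by ring
  -- curl-curl identities
  have hc1 : (curl2Op PX PY Qx Qy W).1 = (dgy PY Qy).mulVec φ := by
    rw [hφ]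
    show -(dgy PY Qy).mulVec ((dgy PY Qy).mulVec W.1)
        + (dgx PX Qx).mulVec ((dgy PY Qy).mulVec W.2) = _
    rw [dg_comm PX PY Qx Qy W.2]
    rw [show (fun k => (dgx PX Qx).mulVec W.2 k - (dgy PY Qy).mulVec W.1 k)
        = (dgx PX Qx).mulVec W.2 - (dgy PY Qy).mulVec W.1 from rfl, Matrix.mulVec_sub]
    abel
  have hc2 : (curl2Op PX PY Qx Qy W).2 = fun k => -((dgx PX Qx).mulVec φ k) := by
    rw [hφ]
    show (dgx PX Qx).mulVec ((dgy PY Qy).mulVec W.1)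
        - (dgx PX Qx).mulVec ((dgx PX Qx).mulVec W.2) = _
    rw [show (fun k => (dgx PX Qx).mulVec W.2 k - (dgy PY Qy).mulVec W.1 k)
        = (dgx PX Qx).mulVec W.2 - (dgy PY Qy).mulVec W.1 from rfl, Matrix.mulVec_sub]
    funext k
    simp [Matrix.mulVec_sub]
  have hc1' : ip PX PY W.1 (curl2Op PX PY Qx Qy W).1
      = ip PX PY W.1 ((dgy PY Qy).mulVec φ) := by rw [hc1]
  have hc2' : ip PX PY W.2 (curl2Op PX PY Qx Qy W).2
      = -ip PX PY W.2 ((dgx PX Qx).mulVec φ) := by rw [hc2, ip_neg_fun]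
  have s3 : ip PX PY W.1 ((dgy PY Qy).mulVec φ) + ip PX PY ((dgy PY Qy).mulVec W.1) φ
      = ∑ k : Fin N × Fin M, PX k.1 * (by_ M k.2 * (W.1 k * φ k)) :=
    sbp_y PX PY Qy hPYne hQy _ _
  have s4 : ip PX PY W.2 ((dgx PX Qx).mulVec φ) + ip PX PY ((dgx PX Qx).mulVec W.2) φ
      = ∑ k : Fin N × Fin M, PY k.2 * (bx N k.1 * (W.2 k * φ k)) :=
    sbp_x PX PY Qx hPXne hQx _ _
  have hphi : ip PX PY φ φ
      = ip PX PY ((dgx PX Qx).mulVec W.2) φ - ip PX PY ((dgy PY Qy).mulVec W.1) φ := by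
    conv_lhs => rw [hφ]
    exact ip_sub PX PY _ _ _
  have hcurlE : ε * (ip PX PY W.1 (curl2Op PX PY Qx Qy W).1
        + ip PX PY W.2 (curl2Op PX PY Qx Qy W).2)
      = ε * (∑ k : Fin N × Fin M, PX k.1 * (by_ M k.2 * (W.1 k * φ k)))
        - ε * (∑ k : Fin N × Fin M, PY k.2 * (bx N k.1 * (W.2 k * φ k)))
        + ε * ip PX PY φ φ := by
    have base : ip PX PY W.1 (curl2Op PX PY Qx Qy W).1
        + ip PX PY W.2 (curl2Op PX PY Qx Qy W).2
        = (∑ k : Fin N × Fin M, PX k.1 * (by_ M k.2 * (W.1 k * φ k)))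
          - (∑ k : Fin N × Fin M, PY k.2 * (bx N k.1 * (W.2 k * φ k)))
          + ip PX PY φ φ := by linarith [hc1', hc2', s3, s4, hphi]
    rw [base]; ring
  -- penalty term
  have hA5 : ip PX PY W.1 ((Bmat PX PY (fun k => sL' k + ε * sL'' k)
        (fun k => sR' k + ε * sR'' k) (fun k => sD' k + ε * sD'' k)
        (fun k => sU' k + ε * sU'' k)).mulVec W.1)
      + ip PX PY W.2 ((Bmat PX PY (fun k => sL' k + ε * sL'' k)
        (fun k => sR' k + ε * sR'' k) (fun k => sD' k + ε * sD'' k)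
        (fun k => sU' k + ε * sU'' k)).mulVec W.2)
      = ∑ k : Fin N × Fin M,
          (PY k.2 * ((sL' k + ε * sL'' k) * (if (k.1 : ℕ) = 0 then 1 else 0)
              + (sR' k + ε * sR'' k) * (if (k.1 : ℕ) = N - 1 then 1 else 0))
            + PX k.1 * ((sD' k + ε * sD'' k) * (if (k.2 : ℕ) = 0 then 1 else 0)
              + (sU' k + ε * sU'' k) * (if (k.2 : ℕ) = M - 1 then 1 else 0)))
          * (W.1 k * W.1 k + W.2 k * W.2 k) := by
    rw [ip_B PX PY hPXne hPYne _ _ _ _ W.1 W.1, ip_B PX PY hPXne hPYne _ _ _ _ W.2 W.2,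
      ← Finset.sum_add_distrib]
    exact Finset.sum_congr rfl fun k _ => by ring
  -- boundary estimate
  have key : -(1/2) * (∑ k : Fin N × Fin M,
        PY k.2 * (bx N k.1 * (u1 k * (W.1 k * W.1 k + W.2 k * W.2 k))))
      - (1/2) * (∑ k : Fin N × Fin M,
        PX k.1 * (by_ M k.2 * (u2 k * (W.1 k * W.1 k + W.2 k * W.2 k))))
      - ε * ip PX PY φ φ
      - ε * (∑ k : Fin N × Fin M, PX k.1 * (by_ M k.2 * (W.1 k * φ k)))
      + ε * (∑ k : Fin N × Fin M, PY k.2 * (bx N k.1 * (W.2 k * φ k)))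
      + (∑ k : Fin N × Fin M,
          (PY k.2 * ((sL' k + ε * sL'' k) * (if (k.1 : ℕ) = 0 then 1 else 0)
              + (sR' k + ε * sR'' k) * (if (k.1 : ℕ) = N - 1 then 1 else 0))
            + PX k.1 * ((sD' k + ε * sD'' k) * (if (k.2 : ℕ) = 0 then 1 else 0)
              + (sU' k + ε * sU'' k) * (if (k.2 : ℕ) = M - 1 then 1 else 0)))
          * (W.1 k * W.1 k + W.2 k * W.2 k)) ≤ 0 := by
    have hmerge : -(1/2) * (∑ k : Fin N × Fin M,
          PY k.2 * (bx N k.1 * (u1 k * (W.1 k * W.1 k + W.2 k * W.2 k))))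
        - (1/2) * (∑ k : Fin N × Fin M,
          PX k.1 * (by_ M k.2 * (u2 k * (W.1 k * W.1 k + W.2 k * W.2 k))))
        - ε * ip PX PY φ φ
        - ε * (∑ k : Fin N × Fin M, PX k.1 * (by_ M k.2 * (W.1 k * φ k)))
        + ε * (∑ k : Fin N × Fin M, PY k.2 * (bx N k.1 * (W.2 k * φ k)))
        + (∑ k : Fin N × Fin M,
            (PY k.2 * ((sL' k + ε * sL'' k) * (if (k.1 : ℕ) = 0 then 1 else 0)
                + (sR' k + ε * sR'' k) * (if (k.1 : ℕ) = N - 1 then 1 else 0))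
              + PX k.1 * ((sD' k + ε * sD'' k) * (if (k.2 : ℕ) = 0 then 1 else 0)
                + (sU' k + ε * sU'' k) * (if (k.2 : ℕ) = M - 1 then 1 else 0)))
            * (W.1 k * W.1 k + W.2 k * W.2 k))
        = ∑ k : Fin N × Fin M,
          (-(1/2) * (PY k.2 * (bx N k.1 * (u1 k * (W.1 k * W.1 k + W.2 k * W.2 k))))
            - (1/2) * (PX k.1 * (by_ M k.2 * (u2 k * (W.1 k * W.1 k + W.2 k * W.2 k))))
            - ε * (PX k.1 * PY k.2 * (φ k * φ k))
            - ε * (PX k.1 * (by_ M k.2 * (W.1 k * φ k)))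
            + ε * (PY k.2 * (bx N k.1 * (W.2 k * φ k)))
            + (PY k.2 * ((sL' k + ε * sL'' k) * (if (k.1 : ℕ) = 0 then 1 else 0)
                + (sR' k + ε * sR'' k) * (if (k.1 : ℕ) = N - 1 then 1 else 0))
              + PX k.1 * ((sD' k + ε * sD'' k) * (if (k.2 : ℕ) = 0 then 1 else 0)
                + (sU' k + ε * sU'' k) * (if (k.2 : ℕ) = M - 1 then 1 else 0)))
              * (W.1 k * W.1 k + W.2 k * W.2 k)) := by
      rw [ip_eq]
      simp only [Finset.mul_sum, sub_eq_add_neg, ← Finset.sum_neg_distrib,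
        ← Finset.sum_add_distrib]
      try exact Finset.sum_congr rfl fun k _ => by ring
    rw [hmerge]
    refine Finset.sum_nonpos fun k _ => ?_
    exact node_bound hN hM k.1 k.2 hdx hdy hp hε (hPY k.2) (hPX k.1)
      (hbR k.1) (hbL k.1) (hbU k.2) (hbD k.2)
      (hsR' k) (hsR'' k) (hsL' k) (hsL'' k) (hsU' k) (hsU'' k) (hsD' k) (hsD'' k)
  -- finish
  have hK1' : |ip PX PY (fun k => u1 k * (dgx PX Qx).mulVec W.1 k
        - (dgx PX Qx).mulVec (fun l => u1 l * W.1 l) k) W.1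
      + ip PX PY (fun k => u1 k * (dgx PX Qx).mulVec W.2 k
        - (dgx PX Qx).mulVec (fun l => u1 l * W.2 l) k) W.2| ≤ c * vip PX PY W W := hK1
  have hK2' : |ip PX PY (fun k => u2 k * (dgy PY Qy).mulVec W.1 k
        - (dgy PY Qy).mulVec (fun l => u2 l * W.1 l) k) W.1
      + ip PX PY (fun k => u2 k * (dgy PY Qy).mulVec W.2 k
        - (dgy PY Qy).mulVec (fun l => u2 l * W.2 l) k) W.2| ≤ c * vip PX PY W W := hK2
  obtain ⟨h1l, h1r⟩ := abs_le.mp hK1'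
  obtain ⟨h2l, h2r⟩ := abs_le.mp hK2'
  obtain ⟨h3l, h3r⟩ := abs_le.mp hK3
  rw [split]
  linarith [s1, s2, sw1, sw2, sb1, sb2, cm1, cm2, hsum1,
    t1, t2, tw1, tw2, tb1, tb2, tm1, tm2, hsum2,
    hcurlE, hA5, key]
/-- Energy stability of the SBP-SAT scheme for the resistive induction equation
with Dirichlet boundary conditions (Theorem `stab1`):
`‖V(t)‖_𝐏² ≤ e^{4ct} ‖V(0)‖_𝐏²`.  Here `P_x = Δx·diag(pˣ)`, `P_y = Δy·diag(pʸ)`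
with common boundary weight `p`, and the penalties are `Σ_• = Σ'_• + ε Σ''_•`. -/
theorem stmt7 (N M : ℕ) (hN : 2 ≤ N) (hM : 2 ≤ M)
    (dx dy : ℝ) (hdx : 0 < dx) (hdy : 0 < dy)
    (px : Fin N → ℝ) (hpx : ∀ i, 0 < px i)
    (py : Fin M → ℝ) (hpy : ∀ j, 0 < py j)
    (p : ℝ)
    (hp0x : px ⟨0, by omega⟩ = p) (hpNx : px ⟨N - 1, by omega⟩ = p)
    (hp0y : py ⟨0, by omega⟩ = p) (hpMy : py ⟨M - 1, by omega⟩ = p)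
    (Qx : Matrix (Fin N) (Fin N) ℝ) (hQx : Qx + Qxᵀ = RmatN N - LmatN N)
    (Qy : Matrix (Fin M) (Fin M) ℝ) (hQy : Qy + Qyᵀ = RmatN M - LmatN M)
    (u1 u2 : Grid N M) (ε : ℝ) (hε : 0 < ε) (c : ℝ) (hc : 0 ≤ c)
    (hcomm1 : ∀ W : VGrid N M,
      |vip (fun i => dx * px i) (fun j => dy * py j)
        (fun k => u1 k * (dgx (fun i => dx * px i) Qx).mulVec W.1 k
            - (dgx (fun i => dx * px i) Qx).mulVec (fun l => u1 l * W.1 l) k,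
         fun k => u1 k * (dgx (fun i => dx * px i) Qx).mulVec W.2 k
            - (dgx (fun i => dx * px i) Qx).mulVec (fun l => u1 l * W.2 l) k) W|
        ≤ c * vip (fun i => dx * px i) (fun j => dy * py j) W W)
    (hcomm2 : ∀ W : VGrid N M,
      |vip (fun i => dx * px i) (fun j => dy * py j)
        (fun k => u2 k * (dgy (fun j => dy * py j) Qy).mulVec W.1 k
            - (dgy (fun j => dy * py j) Qy).mulVec (fun l => u2 l * W.1 l) k,
         fun k => u2 k * (dgy (fun j => dy * py j) Qy).mulVec W.2 k
            - (dgy (fun j => dy * py j) Qy).mulVec (fun l => u2 l * W.2 l) k) W|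
        ≤ c * vip (fun i => dx * px i) (fun j => dy * py j) W W)
    (hcommC : ∀ W : VGrid N M,
      |vip (fun i => dx * px i) (fun j => dy * py j) W
          (Cop (fun i => dx * px i) (fun j => dy * py j) Qx Qy u1 u2 W)|
        ≤ c * vip (fun i => dx * px i) (fun j => dy * py j) W W)
    (sL' sR' sD' sU' sL'' sR'' sD'' sU'' : Grid N M)
    (hsR' : ∀ j : Fin M,
      sR' (⟨N - 1, by omega⟩, j) ≤ min (u1 (⟨N - 1, by omega⟩, j)) 0 / 2)
    (hsL' : ∀ j : Fin M,
      sL' (⟨0, by omega⟩, j) ≤ -(max (u1 (⟨0, by omega⟩, j)) 0) / 2)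
    (hsU' : ∀ i : Fin N,
      sU' (i, ⟨M - 1, by omega⟩) ≤ min (u2 (i, ⟨M - 1, by omega⟩)) 0 / 2)
    (hsD' : ∀ i : Fin N,
      sD' (i, ⟨0, by omega⟩) ≤ -(max (u2 (i, ⟨0, by omega⟩)) 0) / 2)
    (hsR'' : ∀ j : Fin M, sR'' (⟨N - 1, by omega⟩, j) ≤ -1 / (2 * p * dx))
    (hsL'' : ∀ j : Fin M, sL'' (⟨0, by omega⟩, j) ≤ -1 / (2 * p * dx))
    (hsU'' : ∀ i : Fin N, sU'' (i, ⟨M - 1, by omega⟩) ≤ -1 / (2 * p * dy))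
    (hsD'' : ∀ i : Fin N, sD'' (i, ⟨0, by omega⟩) ≤ -1 / (2 * p * dy))
    (hzero : ∀ k : Fin N × Fin M,
      ((k.1 : ℕ) ≠ N - 1 → sR' k = 0 ∧ sR'' k = 0) ∧
      ((k.1 : ℕ) ≠ 0 → sL' k = 0 ∧ sL'' k = 0) ∧
      ((k.2 : ℕ) ≠ M - 1 → sU' k = 0 ∧ sU'' k = 0) ∧
      ((k.2 : ℕ) ≠ 0 → sD' k = 0 ∧ sD'' k = 0))
    (V : ℝ → VGrid N M)
    (hV : ∀ t : ℝ, 0 ≤ t →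
      HasDerivAt V
        (rhsDirichlet (fun i => dx * px i) (fun j => dy * py j) Qx Qy u1 u2 ε
          (fun k => sL' k + ε * sL'' k) (fun k => sR' k + ε * sR'' k)
          (fun k => sD' k + ε * sD'' k) (fun k => sU' k + ε * sU'' k) (V t)) t) :
    ∀ t : ℝ, 0 ≤ t →
      vip (fun i => dx * px i) (fun j => dy * py j) (V t) (V t)
        ≤ Real.exp (4 * c * t) *
            vip (fun i => dx * px i) (fun j => dy * py j) (V 0) (V 0) := by
  have hPX : ∀ i, (0:ℝ) < dx * px i := fun i => mul_pos hdx (hpx i)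
  have hPY : ∀ j, (0:ℝ) < dy * py j := fun j => mul_pos hdy (hpy j)
  have hp : 0 < p := hp0x ▸ hpx _
  have hbR : ∀ i : Fin N, (i : ℕ) = N - 1 → dx * px i = dx * p := by
    intro i hi
    have : i = ⟨N - 1, by omega⟩ := Fin.ext hi
    rw [this, hpNx]
  have hbL : ∀ i : Fin N, (i : ℕ) = 0 → dx * px i = dx * p := by
    intro i hi
    have : i = ⟨0, by omega⟩ := Fin.ext hi
    rw [this, hp0x]
  have hbU : ∀ j : Fin M, (j : ℕ) = M - 1 → dy * py j = dy * p := by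
    intro j hj
    have : j = ⟨M - 1, by omega⟩ := Fin.ext hj
    rw [this, hpMy]
  have hbD : ∀ j : Fin M, (j : ℕ) = 0 → dy * py j = dy * p := by
    intro j hj
    have : j = ⟨0, by omega⟩ := Fin.ext hj
    rw [this, hp0y]
  have hsR'c : ∀ k : Fin N × Fin M, (k.1 : ℕ) = N - 1 → sR' k ≤ min (u1 k) 0 / 2 := by
    intro k hk; obtain ⟨k1, k2⟩ := k
    have : k1 = ⟨N - 1, by omega⟩ := Fin.ext hk
    rw [this]; exact hsR' k2
  have hsL'c : ∀ k : Fin N × Fin M, (k.1 : ℕ) = 0 → sL' k ≤ -(max (u1 k) 0) / 2 := by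
    intro k hk; obtain ⟨k1, k2⟩ := k
    have : k1 = ⟨0, by omega⟩ := Fin.ext hk
    rw [this]; exact hsL' k2
  have hsU'c : ∀ k : Fin N × Fin M, (k.2 : ℕ) = M - 1 → sU' k ≤ min (u2 k) 0 / 2 := by
    intro k hk; obtain ⟨k1, k2⟩ := k
    have : k2 = ⟨M - 1, by omega⟩ := Fin.ext hk
    rw [this]; exact hsU' k1
  have hsD'c : ∀ k : Fin N × Fin M, (k.2 : ℕ) = 0 → sD' k ≤ -(max (u2 k) 0) / 2 := by
    intro k hk; obtain ⟨k1, k2⟩ := k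
    have : k2 = ⟨0, by omega⟩ := Fin.ext hk
    rw [this]; exact hsD' k1
  have hsR''c : ∀ k : Fin N × Fin M, (k.1 : ℕ) = N - 1 → sR'' k ≤ -1 / (2 * p * dx) := by
    intro k hk; obtain ⟨k1, k2⟩ := k
    have : k1 = ⟨N - 1, by omega⟩ := Fin.ext hk
    rw [this]; exact hsR'' k2
  have hsL''c : ∀ k : Fin N × Fin M, (k.1 : ℕ) = 0 → sL'' k ≤ -1 / (2 * p * dx) := by
    intro k hk; obtain ⟨k1, k2⟩ := k
    have : k1 = ⟨0, by omega⟩ := Fin.ext hk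
    rw [this]; exact hsL'' k2
  have hsU''c : ∀ k : Fin N × Fin M, (k.2 : ℕ) = M - 1 → sU'' k ≤ -1 / (2 * p * dy) := by
    intro k hk; obtain ⟨k1, k2⟩ := k
    have : k2 = ⟨M - 1, by omega⟩ := Fin.ext hk
    rw [this]; exact hsU'' k1
  have hsD''c : ∀ k : Fin N × Fin M, (k.2 : ℕ) = 0 → sD'' k ≤ -1 / (2 * p * dy) := by
    intro k hk; obtain ⟨k1, k2⟩ := k
    have : k2 = ⟨0, by omega⟩ := Fin.ext hk
    rw [this]; exact hsD'' k1
  -- energy bound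
  have hbound : ∀ t : ℝ, 0 ≤ t →
      vip (fun i => dx * px i) (fun j => dy * py j) (V t)
        (rhsDirichlet (fun i => dx * px i) (fun j => dy * py j) Qx Qy u1 u2 ε
          (fun k => sL' k + ε * sL'' k) (fun k => sR' k + ε * sR'' k)
          (fun k => sD' k + ε * sD'' k) (fun k => sU' k + ε * sU'' k) (V t))
      ≤ 2 * c * vip (fun i => dx * px i) (fun j => dy * py j) (V t) (V t) := by
    intro t ht
    exact energy_est hN hM dx dy p hdx hdy hp _ hPX _ hPY hbR hbL hbU hbD
      Qx hQx Qy hQy u1 u2 ε hε c hc sL' sR' sD' sU' sL'' sR'' sD'' sU''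
      hsR'c hsL'c hsU'c hsD'c hsR''c hsL''c hsU''c hsD''c (V t)
      (hcomm1 (V t)) (hcomm2 (V t)) (hcommC (V t))
  -- derivative of energy
  have hEDeriv : ∀ t : ℝ, 0 ≤ t →
      HasDerivAt (fun s => vip (fun i => dx * px i) (fun j => dy * py j) (V s) (V s))
        (2 * vip (fun i => dx * px i) (fun j => dy * py j) (V t)
          (rhsDirichlet (fun i => dx * px i) (fun j => dy * py j) Qx Qy u1 u2 ε
            (fun k => sL' k + ε * sL'' k) (fun k => sR' k + ε * sR'' k)
            (fun k => sD' k + ε * sD'' k) (fun k => sU' k + ε * sU'' k) (V t))) t := by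
    intro t ht
    have hVt := hV t ht
    have h1 : ∀ k : Fin N × Fin M, HasDerivAt (fun s => (V s).1 k)
        ((rhsDirichlet (fun i => dx * px i) (fun j => dy * py j) Qx Qy u1 u2 ε
          (fun k => sL' k + ε * sL'' k) (fun k => sR' k + ε * sR'' k)
          (fun k => sD' k + ε * sD'' k) (fun k => sU' k + ε * sU'' k) (V t)).1 k) t := by
      intro k
      have := (hasDerivAt_const t
        (((ContinuousLinearMap.proj k).comp (ContinuousLinearMap.fst ℝ (Grid N M) (Grid N M))) :
          VGrid N M →L[ℝ] ℝ)).clm_apply hVt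
      simpa using this
    have h2 : ∀ k : Fin N × Fin M, HasDerivAt (fun s => (V s).2 k)
        ((rhsDirichlet (fun i => dx * px i) (fun j => dy * py j) Qx Qy u1 u2 ε
          (fun k => sL' k + ε * sL'' k) (fun k => sR' k + ε * sR'' k)
          (fun k => sD' k + ε * sD'' k) (fun k => sU' k + ε * sU'' k) (V t)).2 k) t := by
      intro k
      have := (hasDerivAt_const t
        (((ContinuousLinearMap.proj k).comp (ContinuousLinearMap.snd ℝ (Grid N M) (Grid N M))) :
          VGrid N M →L[ℝ] ℝ)).clm_apply hVt
      simpa using this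
    have hsum1 : HasDerivAt (fun s => ∑ k : Fin N × Fin M,
          (dx * px k.1) * (dy * py k.2) * ((V s).1 k * (V s).1 k))
        (∑ k : Fin N × Fin M, (dx * px k.1) * (dy * py k.2) *
          ((rhsDirichlet (fun i => dx * px i) (fun j => dy * py j) Qx Qy u1 u2 ε
            (fun k => sL' k + ε * sL'' k) (fun k => sR' k + ε * sR'' k)
            (fun k => sD' k + ε * sD'' k) (fun k => sU' k + ε * sU'' k) (V t)).1 k * (V t).1 k
          + (V t).1 k *
            (rhsDirichlet (fun i => dx * px i) (fun j => dy * py j) Qx Qy u1 u2 ε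
            (fun k => sL' k + ε * sL'' k) (fun k => sR' k + ε * sR'' k)
            (fun k => sD' k + ε * sD'' k) (fun k => sU' k + ε * sU'' k) (V t)).1 k)) t :=
      HasDerivAt.fun_sum fun k _ => HasDerivAt.const_mul _ ((h1 k).mul (h1 k))
    have hsum2 : HasDerivAt (fun s => ∑ k : Fin N × Fin M,
          (dx * px k.1) * (dy * py k.2) * ((V s).2 k * (V s).2 k))
        (∑ k : Fin N × Fin M, (dx * px k.1) * (dy * py k.2) *
          ((rhsDirichlet (fun i => dx * px i) (fun j => dy * py j) Qx Qy u1 u2 ε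
            (fun k => sL' k + ε * sL'' k) (fun k => sR' k + ε * sR'' k)
            (fun k => sD' k + ε * sD'' k) (fun k => sU' k + ε * sU'' k) (V t)).2 k * (V t).2 k
          + (V t).2 k *
            (rhsDirichlet (fun i => dx * px i) (fun j => dy * py j) Qx Qy u1 u2 ε
            (fun k => sL' k + ε * sL'' k) (fun k => sR' k + ε * sR'' k)
            (fun k => sD' k + ε * sD'' k) (fun k => sU' k + ε * sU'' k) (V t)).2 k)) t :=
      HasDerivAt.fun_sum fun k _ => HasDerivAt.const_mul _ ((h2 k).mul (h2 k))
    have heq : (fun s => vip (fun i => dx * px i) (fun j => dy * py j) (V s) (V s))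
        = fun s => (∑ k : Fin N × Fin M,
            (dx * px k.1) * (dy * py k.2) * ((V s).1 k * (V s).1 k))
          + (∑ k : Fin N × Fin M,
            (dx * px k.1) * (dy * py k.2) * ((V s).2 k * (V s).2 k)) := by
      funext s
      simp only [vip, ip_eq]
    rw [heq]
    have hD : 2 * vip (fun i => dx * px i) (fun j => dy * py j) (V t)
          (rhsDirichlet (fun i => dx * px i) (fun j => dy * py j) Qx Qy u1 u2 ε
            (fun k => sL' k + ε * sL'' k) (fun k => sR' k + ε * sR'' k)
            (fun k => sD' k + ε * sD'' k) (fun k => sU' k + ε * sU'' k) (V t))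
        = (∑ k : Fin N × Fin M, (dx * px k.1) * (dy * py k.2) *
          ((rhsDirichlet (fun i => dx * px i) (fun j => dy * py j) Qx Qy u1 u2 ε
            (fun k => sL' k + ε * sL'' k) (fun k => sR' k + ε * sR'' k)
            (fun k => sD' k + ε * sD'' k) (fun k => sU' k + ε * sU'' k) (V t)).1 k * (V t).1 k
          + (V t).1 k *
            (rhsDirichlet (fun i => dx * px i) (fun j => dy * py j) Qx Qy u1 u2 ε
            (fun k => sL' k + ε * sL'' k) (fun k => sR' k + ε * sR'' k)
            (fun k => sD' k + ε * sD'' k) (fun k => sU' k + ε * sU'' k) (V t)).1 k))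
          + (∑ k : Fin N × Fin M, (dx * px k.1) * (dy * py k.2) *
          ((rhsDirichlet (fun i => dx * px i) (fun j => dy * py j) Qx Qy u1 u2 ε
            (fun k => sL' k + ε * sL'' k) (fun k => sR' k + ε * sR'' k)
            (fun k => sD' k + ε * sD'' k) (fun k => sU' k + ε * sU'' k) (V t)).2 k * (V t).2 k
          + (V t).2 k *
            (rhsDirichlet (fun i => dx * px i) (fun j => dy * py j) Qx Qy u1 u2 ε
            (fun k => sL' k + ε * sL'' k) (fun k => sR' k + ε * sR'' k)
            (fun k => sD' k + ε * sD'' k) (fun k => sU' k + ε * sU'' k) (V t)).2 k)) := by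
      simp only [vip, ip_eq, mul_add, Finset.mul_sum]
      congr 1 <;> exact Finset.sum_congr rfl fun k _ => by ring
    rw [hD]
    exact hsum1.add hsum2
  -- Gronwall
  intro t ht
  have hgd : ∀ s : ℝ, 0 ≤ s → HasDerivAt
      (fun r => vip (fun i => dx * px i) (fun j => dy * py j) (V r) (V r)
        * Real.exp (-(4*c)*r))
      (2 * vip (fun i => dx * px i) (fun j => dy * py j) (V s)
          (rhsDirichlet (fun i => dx * px i) (fun j => dy * py j) Qx Qy u1 u2 ε
            (fun k => sL' k + ε * sL'' k) (fun k => sR' k + ε * sR'' k)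
            (fun k => sD' k + ε * sD'' k) (fun k => sU' k + ε * sU'' k) (V s))
        * Real.exp (-(4*c)*s)
       + vip (fun i => dx * px i) (fun j => dy * py j) (V s) (V s)
        * (-(4*c) * Real.exp (-(4*c)*s))) s := by
    intro s hs
    have hexp : HasDerivAt (fun r : ℝ => Real.exp (-(4*c)*r))
        (-(4*c) * Real.exp (-(4*c)*s)) s := by
      have h : HasDerivAt (fun r : ℝ => -(4*c)*r) (-(4*c)) s := by
        simpa using (hasDerivAt_id s).const_mul (-(4*c))
      simpa [mul_comm] using h.exp
    exact (hEDeriv s hs).mul hexp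
  have anti : AntitoneOn
      (fun r => vip (fun i => dx * px i) (fun j => dy * py j) (V r) (V r)
        * Real.exp (-(4*c)*r)) (Set.Ici 0) := by
    apply antitoneOn_of_deriv_nonpos (convex_Ici 0)
    · intro s hs
      exact ((hgd s hs).continuousAt).continuousWithinAt
    · intro s hs
      rw [interior_Ici] at hs
      exact ((hgd s (le_of_lt hs)).differentiableAt).differentiableWithinAt
    · intro s hs
      rw [interior_Ici] at hs
      have hs0 : (0:ℝ) ≤ s := le_of_lt hs
      rw [(hgd s hs0).deriv]
      have hb := hbound s hs0
      have hepos := Real.exp_pos (-(4*c)*s)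
      nlinarith [mul_le_mul_of_nonneg_right hb hepos.le]
  have h0 : vip (fun i => dx * px i) (fun j => dy * py j) (V t) (V t)
        * Real.exp (-(4*c)*t)
      ≤ vip (fun i => dx * px i) (fun j => dy * py j) (V 0) (V 0)
        * Real.exp (-(4*c)*0) :=
    anti Set.self_mem_Ici (Set.mem_Ici.mpr ht) ht
  rw [show (-(4*c)*(0:ℝ)) = 0 by ring, Real.exp_zero, mul_one] at h0
  have hepos := Real.exp_pos (4*c*t)
  have h2 := mul_le_mul_of_nonneg_right h0 hepos.le
  rw [mul_assoc, show Real.exp (-(4*c)*t) * Real.exp (4*c*t) = 1 by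
    rw [← Real.exp_add, show -(4*c)*t + 4*c*t = 0 by ring, Real.exp_zero], mul_one] at h2
  linarith [h2]
end
end

section
/- Fix N ≥ 3 and h > 0. Let D be the N×N second-order SBP difference operator defined by (Dw)₀ = (w₁ − w₀)/h, (Dw)_j = (w_{j+1} − w_{j−1})/(2h) for 1 ≤ j ≤ N−2, and (Dw)_{N−1} = (w_{N−1} − w_{N−2})/h, and let ‖v‖_P² = h(½v₀² + Σ_{j=1}^{N−2} v_j² + ½v_{N−1}²). Then for all u, w ∈ ℝᴺ and every L ≥ 0 such that |u_{j+1} − u_j| ≤ L·h for all 0 ≤ j ≤ N−2: ‖D(u∘w) − u∘(Dw)‖_P ≤ 2L·‖w‖_P. -/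
lemma sum_comp_le_two' {N : ℕ} (f : Fin N → ℝ) (hf : ∀ j, 0 ≤ f j)
    (σ : Fin N → Fin N) (a b : Fin N → Fin N)
    (hσ : ∀ j, j = a (σ j) ∨ j = b (σ j)) :
    ∑ j, f (σ j) ≤ 2 * ∑ j, f j := by
  rw [Finset.sum_comp]
  have h1 : ∀ k ∈ Finset.univ.image σ,
      ((Finset.univ.filter fun j => σ j = k).card • f k) ≤ 2 * f k := by
    intro k hk
    rw [nsmul_eq_mul]
    have hcard : (Finset.univ.filter fun j => σ j = k).card ≤ 2 := by
      have hsub : (Finset.univ.filter fun j => σ j = k) ⊆ {a k, b k} := by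
        intro j hj
        simp only [Finset.mem_filter, Finset.mem_univ, true_and] at hj
        rcases hσ j with h' | h' <;> simp [Finset.mem_insert, hj ▸ h']
      calc _ ≤ ({a k, b k} : Finset (Fin N)).card := Finset.card_le_card hsub
        _ ≤ 2 := (Finset.card_insert_le _ _).trans (by simp)
    have hc : ((Finset.univ.filter fun j => σ j = k).card : ℝ) ≤ 2 := by exact_mod_cast hcard
    nlinarith [hf k]
  calc (∑ k ∈ Finset.univ.image σ, (Finset.univ.filter fun j => σ j = k).card • f k)
      ≤ ∑ k ∈ Finset.univ.image σ, 2 * f k := Finset.sum_le_sum h1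
    _ ≤ ∑ k, 2 * f k := Finset.sum_le_sum_of_subset_of_nonneg (Finset.subset_univ _)
        (fun k _ _ => by nlinarith [hf k])
    _ = 2 * ∑ k, f k := by rw [Finset.mul_sum]

noncomputable def Dop (N : ℕ) (hN : 3 ≤ N) (h : ℝ) (w : Fin N → ℝ) : Fin N → ℝ :=
  fun j =>
    if hj0 : (j : ℕ) = 0 then (w ⟨1, by omega⟩ - w ⟨0, by omega⟩) / h
    else if hjN : (j : ℕ) = N - 1 then (w ⟨N - 1, by omega⟩ - w ⟨N - 2, by omega⟩) / h
    else (w ⟨(j : ℕ) + 1, by have := j.isLt; omega⟩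
          - w ⟨(j : ℕ) - 1, by omega⟩) / (2 * h)

lemma Dop_zero (N : ℕ) (hN : 3 ≤ N) (h : ℝ) (w : Fin N → ℝ) :
    Dop N hN h w ⟨0, by omega⟩ = (w ⟨1, by omega⟩ - w ⟨0, by omega⟩) / h := by
  rw [Dop, dif_pos (by simp)]

lemma Dop_last (N : ℕ) (hN : 3 ≤ N) (h : ℝ) (w : Fin N → ℝ) :
    Dop N hN h w ⟨N - 1, by omega⟩ = (w ⟨N - 1, by omega⟩ - w ⟨N - 2, by omega⟩) / h := by
  rw [Dop]
  rw [dif_neg (by simp; omega), dif_pos (by simp)]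

lemma Dop_mid (N : ℕ) (hN : 3 ≤ N) (h : ℝ) (w : Fin N → ℝ) (m : ℕ)
    (h1 : 1 ≤ m) (h2 : m ≤ N - 2) :
    Dop N hN h w ⟨m, by apply Nat.lt_of_lt_of_le (Nat.lt_succ_self m); omega⟩
      = (w ⟨m + 1, by apply Nat.lt_of_lt_of_le (Nat.lt_succ_self (m + 1)); omega⟩ - w ⟨m - 1, by omega⟩) / (2 * h) := by
  rw [Dop]
  rw [dif_neg (by simp; omega), dif_neg (by simp; omega)]

def sigmaF (N : ℕ) (hN : 3 ≤ N) : Fin N → Fin N :=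
  fun j => ⟨min ((j : ℕ) + 1) (N - 1), by omega⟩

def tauF (N : ℕ) : Fin N → Fin N :=
  fun j => ⟨(j : ℕ) - 1, by have := j.isLt; omega⟩

lemma keyZero (N : ℕ) (hN : 3 ≤ N) (h : ℝ) (hh : 0 < h) (u w : Fin N → ℝ)
    (L : ℝ)
    (hb : |u ⟨1, by omega⟩ - u ⟨0, by omega⟩| ≤ L * h) :
    (Dop N hN h (fun k => u k * w k) ⟨0, by omega⟩
      - u ⟨0, by omega⟩ * Dop N hN h w ⟨0, by omega⟩) ^ 2
      ≤ L ^ 2 * w ⟨1, by omega⟩ ^ 2 := by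
  rw [Dop_zero, Dop_zero]
  have hcv : ((fun k => u k * w k) (⟨1, by omega⟩ : Fin N)
        - (fun k => u k * w k) (⟨0, by omega⟩ : Fin N)) / h
      - u ⟨0, by omega⟩ * ((w ⟨1, by omega⟩ - w ⟨0, by omega⟩) / h)
      = ((u ⟨1, by omega⟩ - u ⟨0, by omega⟩) * w ⟨1, by omega⟩) / h := by
    field_simp
    ring
  rw [hcv]
  have hb2 : (u ⟨1, by omega⟩ - u ⟨0, by omega⟩) ^ 2 ≤ (L * h) ^ 2 := by
    have := abs_le.mp hb
    exact sq_le_sq' (by linarith) (by linarith)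
  rw [div_pow, div_le_iff₀ (by positivity : (0:ℝ) < h ^ 2)]
  nlinarith [mul_le_mul_of_nonneg_right hb2 (sq_nonneg (w ⟨1, by omega⟩))]

lemma keyLast (N : ℕ) (hN : 3 ≤ N) (h : ℝ) (hh : 0 < h) (u w : Fin N → ℝ)
    (L : ℝ)
    (hb : |u ⟨N - 1, by omega⟩ - u ⟨N - 2, by omega⟩| ≤ L * h) :
    (Dop N hN h (fun k => u k * w k) ⟨N - 1, by omega⟩
      - u ⟨N - 1, by omega⟩ * Dop N hN h w ⟨N - 1, by omega⟩) ^ 2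
      ≤ L ^ 2 * w ⟨N - 2, by omega⟩ ^ 2 := by
  rw [Dop_last, Dop_last]
  have hcv : ((fun k => u k * w k) (⟨N - 1, by omega⟩ : Fin N)
        - (fun k => u k * w k) (⟨N - 2, by omega⟩ : Fin N)) / h
      - u ⟨N - 1, by omega⟩ * ((w ⟨N - 1, by omega⟩ - w ⟨N - 2, by omega⟩) / h)
      = ((u ⟨N - 1, by omega⟩ - u ⟨N - 2, by omega⟩) * w ⟨N - 2, by omega⟩) / h := by
    field_simp
    ring
  rw [hcv]
  have hb2 : (u ⟨N - 1, by omega⟩ - u ⟨N - 2, by omega⟩) ^ 2 ≤ (L * h) ^ 2 := by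
    have := abs_le.mp hb
    exact sq_le_sq' (by linarith) (by linarith)
  rw [div_pow, div_le_iff₀ (by positivity : (0:ℝ) < h ^ 2)]
  nlinarith [mul_le_mul_of_nonneg_right hb2 (sq_nonneg (w ⟨N - 2, by omega⟩))]

lemma keyMid (N : ℕ) (hN : 3 ≤ N) (h : ℝ) (hh : 0 < h) (u w : Fin N → ℝ)
    (L : ℝ) (m : ℕ) (hm1 : 1 ≤ m) (hm2 : m ≤ N - 2)
    (hba : |u ⟨m + 1, by apply Nat.lt_of_lt_of_le (Nat.lt_succ_self (m + 1)); omega⟩ - u ⟨m, by apply Nat.lt_of_lt_of_le (Nat.lt_succ_self m); omega⟩| ≤ L * h)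
    (hbb : |u ⟨m, by apply Nat.lt_of_lt_of_le (Nat.lt_succ_self m); omega⟩ - u ⟨m - 1, by omega⟩| ≤ L * h) :
    (Dop N hN h (fun k => u k * w k) ⟨m, by apply Nat.lt_of_lt_of_le (Nat.lt_succ_self m); omega⟩
      - u ⟨m, by apply Nat.lt_of_lt_of_le (Nat.lt_succ_self m); omega⟩ * Dop N hN h w ⟨m, by apply Nat.lt_of_lt_of_le (Nat.lt_succ_self m); omega⟩) ^ 2
      ≤ (L ^ 2 / 2) * (w ⟨m + 1, by apply Nat.lt_of_lt_of_le (Nat.lt_succ_self (m + 1)); omega⟩ ^ 2 + w ⟨m - 1, by omega⟩ ^ 2) := by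
  rw [Dop_mid N hN h _ m hm1 hm2, Dop_mid N hN h _ m hm1 hm2]
  have hcv : ((fun k => u k * w k) (⟨m + 1, by apply Nat.lt_of_lt_of_le (Nat.lt_succ_self (m + 1)); omega⟩ : Fin N)
        - (fun k => u k * w k) (⟨m - 1, by omega⟩ : Fin N)) / (2 * h)
      - u ⟨m, by apply Nat.lt_of_lt_of_le (Nat.lt_succ_self m); omega⟩ * ((w ⟨m + 1, by apply Nat.lt_of_lt_of_le (Nat.lt_succ_self (m + 1)); omega⟩ - w ⟨m - 1, by omega⟩) / (2 * h))
      = ((u ⟨m + 1, by apply Nat.lt_of_lt_of_le (Nat.lt_succ_self (m + 1)); omega⟩ - u ⟨m, by apply Nat.lt_of_lt_of_le (Nat.lt_succ_self m); omega⟩) * w ⟨m + 1, by apply Nat.lt_of_lt_of_le (Nat.lt_succ_self (m + 1)); omega⟩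
         + (u ⟨m, by apply Nat.lt_of_lt_of_le (Nat.lt_succ_self m); omega⟩ - u ⟨m - 1, by omega⟩) * w ⟨m - 1, by omega⟩) / (2 * h) := by
    field_simp
    ring
  rw [hcv]
  have hba2 : (u ⟨m + 1, by apply Nat.lt_of_lt_of_le (Nat.lt_succ_self (m + 1)); omega⟩ - u ⟨m, by apply Nat.lt_of_lt_of_le (Nat.lt_succ_self m); omega⟩) ^ 2 ≤ (L * h) ^ 2 := by
    have := abs_le.mp hba
    exact sq_le_sq' (by linarith) (by linarith)
  have hbb2 : (u ⟨m, by apply Nat.lt_of_lt_of_le (Nat.lt_succ_self m); omega⟩ - u ⟨m - 1, by omega⟩) ^ 2 ≤ (L * h) ^ 2 := by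
    have := abs_le.mp hbb
    exact sq_le_sq' (by linarith) (by linarith)
  rw [div_pow, div_le_iff₀ (by positivity : (0:ℝ) < (2 * h) ^ 2)]
  nlinarith [mul_le_mul_of_nonneg_right hba2 (sq_nonneg (w ⟨m + 1, by apply Nat.lt_of_lt_of_le (Nat.lt_succ_self (m + 1)); omega⟩)),
    mul_le_mul_of_nonneg_right hbb2 (sq_nonneg (w ⟨m - 1, by omega⟩)),
    sq_nonneg ((u ⟨m + 1, by apply Nat.lt_of_lt_of_le (Nat.lt_succ_self (m + 1)); omega⟩ - u ⟨m, by apply Nat.lt_of_lt_of_le (Nat.lt_succ_self m); omega⟩) * w ⟨m + 1, by apply Nat.lt_of_lt_of_le (Nat.lt_succ_self (m + 1)); omega⟩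
      - (u ⟨m, by apply Nat.lt_of_lt_of_le (Nat.lt_succ_self m); omega⟩ - u ⟨m - 1, by omega⟩) * w ⟨m - 1, by omega⟩)]

lemma keyAll (N : ℕ) (hN : 3 ≤ N) (h : ℝ) (hh : 0 < h) (u w : Fin N → ℝ)
    (L : ℝ)
    (hu : ∀ j : ℕ, ∀ _ : j ≤ N - 2,
      |u ⟨j + 1, by apply Nat.lt_of_lt_of_le (Nat.lt_succ_self (j + 1)); omega⟩ - u ⟨j, by apply Nat.lt_of_lt_of_le (Nat.lt_succ_self j); omega⟩| ≤ L * h) (j : Fin N) :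
    (if (j : ℕ) = 0 ∨ (j : ℕ) = N - 1 then (1/2 : ℝ) else 1)
        * (Dop N hN h (fun k => u k * w k) j - u j * Dop N hN h w j) ^ 2
      ≤ (L ^ 2 / 2) * (w (sigmaF N hN j) ^ 2 + w (tauF N j) ^ 2) := by
  obtain ⟨m, hm⟩ := j
  rcases eq_or_ne m 0 with h0 | h0
  · subst h0
    have hk := keyZero N hN h hh u w L (hu 0 (by omega))
    have hσv : sigmaF N hN ⟨0, hm⟩ = ⟨1, by omega⟩ := Fin.ext (by simp [sigmaF]; omega)
    have hτv : tauF N ⟨0, hm⟩ = ⟨0, hm⟩ := Fin.ext (by simp [tauF])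
    have hcond : (((⟨0, hm⟩ : Fin N) : ℕ) = 0 ∨ ((⟨0, hm⟩ : Fin N) : ℕ) = N - 1) := by simp
    rw [hσv, hτv, if_pos hcond]
    nlinarith [sq_nonneg (w ⟨0, hm⟩)]
  · rcases eq_or_ne m (N - 1) with hNm | hNm
    · subst hNm
      have hb : |u ⟨N - 1, by omega⟩ - u ⟨N - 2, by omega⟩| ≤ L * h := by
        have hb' := hu (N - 2) (by omega)
        have he : (⟨N - 2 + 1, by omega⟩ : Fin N) = ⟨N - 1, by omega⟩ :=
          Fin.ext (by simp; omega)
        rwa [he] at hb'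
      have hk := keyLast N hN h hh u w L hb
      have hσv : sigmaF N hN ⟨N - 1, hm⟩ = ⟨N - 1, by omega⟩ := Fin.ext (by simp [sigmaF])
      have hτv : tauF N ⟨N - 1, hm⟩ = ⟨N - 2, by omega⟩ := Fin.ext (by simp [tauF]; omega)
      have hcond : (((⟨N - 1, hm⟩ : Fin N) : ℕ) = 0 ∨ ((⟨N - 1, hm⟩ : Fin N) : ℕ) = N - 1) := by
        simp
      rw [hσv, hτv, if_pos hcond]
      nlinarith [sq_nonneg (w ⟨N - 1, hm⟩)]
    · have hm1 : 1 ≤ m := by omega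
      have hm2 : m ≤ N - 2 := by omega
      have hbb : |u ⟨m, by apply Nat.lt_of_lt_of_le (Nat.lt_succ_self m); omega⟩ - u ⟨m - 1, by omega⟩| ≤ L * h := by
        have hb' := hu (m - 1) (by omega)
        have he : (⟨m - 1 + 1, by omega⟩ : Fin N) = ⟨m, by apply Nat.lt_of_lt_of_le (Nat.lt_succ_self m); omega⟩ :=
          Fin.ext (by simp; omega)
        rwa [he] at hb'
      have hk := keyMid N hN h hh u w L m hm1 hm2 (hu m (by omega)) hbb
      have hσv : sigmaF N hN ⟨m, hm⟩ = ⟨m + 1, by apply Nat.lt_of_lt_of_le (Nat.lt_succ_self (m + 1)); omega⟩ := Fin.ext (by simp [sigmaF]; omega)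
      have hτv : tauF N ⟨m, hm⟩ = ⟨m - 1, by omega⟩ := Fin.ext (by simp [tauF])
      have hcond : ¬(((⟨m, hm⟩ : Fin N) : ℕ) = 0 ∨ ((⟨m, hm⟩ : Fin N) : ℕ) = N - 1) := by
        simp [h0, hNm]
      rw [if_neg hcond, hσv, hτv]
      linarith [hk]

noncomputable def PnormSq (N : ℕ) (h : ℝ) (v : Fin N → ℝ) : ℝ :=
  h * ∑ j : Fin N, (if (j : ℕ) = 0 ∨ (j : ℕ) = N - 1 then (1/2 : ℝ) else 1) * v j ^ 2

set_option maxHeartbeats 800000 in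
/-- Variable-coefficient commutator estimate for the second-order SBP operator:
`‖D(u∘w) − u∘(Dw)‖_P ≤ 2L‖w‖_P` whenever `|u_{j+1} − u_j| ≤ Lh` for all `j`. -/
theorem stmt13 (N : ℕ) (hN : 3 ≤ N) (h : ℝ) (hh : 0 < h)
    (u w : Fin N → ℝ) (L : ℝ) (hL : 0 ≤ L)
    (hu : ∀ j : ℕ, ∀ _ : j ≤ N - 2,
      |u ⟨j + 1, by omega⟩ - u ⟨j, by omega⟩| ≤ L * h) :
    Real.sqrt (PnormSq N h
        (fun j => Dop N hN h (fun k => u k * w k) j - u j * Dop N hN h w j))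
      ≤ 2 * L * Real.sqrt (PnormSq N h w) := by
  have hfnn : ∀ j : Fin N, (0:ℝ) ≤ w j ^ 2 := fun j => sq_nonneg _
  have hσsum : ∑ j, w (sigmaF N hN j) ^ 2 ≤ 2 * ∑ j, w j ^ 2 := by
    apply sum_comp_le_two' (fun j => w j ^ 2) hfnn (sigmaF N hN)
      (fun k => ⟨(k : ℕ) - 1, by have := k.isLt; omega⟩) (fun k => ⟨N - 1, by omega⟩)
    intro j
    have hj := j.isLt
    by_cases hjl : (j : ℕ) + 1 ≤ N - 1
    · left
      apply Fin.ext
      show (j : ℕ) = min ((j : ℕ) + 1) (N - 1) - 1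
      omega
    · right
      apply Fin.ext
      show (j : ℕ) = N - 1
      omega
  have hτsum : ∑ j, w (tauF N j) ^ 2 ≤ 2 * ∑ j, w j ^ 2 := by
    apply sum_comp_le_two' (fun j => w j ^ 2) hfnn (tauF N)
      (fun k => ⟨min ((k : ℕ) + 1) (N - 1), by omega⟩) (fun k => ⟨0, by omega⟩)
    intro j
    have hj := j.isLt
    by_cases hj0 : (j : ℕ) = 0
    · right
      apply Fin.ext
      show (j : ℕ) = 0
      omega
    · left
      apply Fin.ext
      show (j : ℕ) = min (((j : ℕ) - 1) + 1) (N - 1)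
      omega
  have hPc : PnormSq N h
      (fun j => Dop N hN h (fun k => u k * w k) j - u j * Dop N hN h w j)
      ≤ (2 * L) ^ 2 * PnormSq N h w := by
    have h1 : PnormSq N h
        (fun j => Dop N hN h (fun k => u k * w k) j - u j * Dop N hN h w j)
        ≤ h * ((L ^ 2 / 2) * ((∑ j, w (sigmaF N hN j) ^ 2) + ∑ j, w (tauF N j) ^ 2)) := by
      rw [PnormSq]
      apply mul_le_mul_of_nonneg_left _ hh.le
      calc ∑ j : Fin N, (if (j : ℕ) = 0 ∨ (j : ℕ) = N - 1 then (1/2 : ℝ) else 1)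
            * (Dop N hN h (fun k => u k * w k) j - u j * Dop N hN h w j) ^ 2
          ≤ ∑ j, (L ^ 2 / 2) * (w (sigmaF N hN j) ^ 2 + w (tauF N j) ^ 2) :=
            Finset.sum_le_sum fun j _ => keyAll N hN h hh u w L hu j
        _ = (L ^ 2 / 2) * ((∑ j, w (sigmaF N hN j) ^ 2) + ∑ j, w (tauF N j) ^ 2) := by
            rw [← Finset.mul_sum, Finset.sum_add_distrib]
    have h2 : h * ((L ^ 2 / 2) * ((∑ j, w (sigmaF N hN j) ^ 2) + ∑ j, w (tauF N j) ^ 2))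
        ≤ h * (2 * L ^ 2 * ∑ j, w j ^ 2) := by
      apply mul_le_mul_of_nonneg_left _ hh.le
      nlinarith [hσsum, hτsum, sq_nonneg L]
    have h3 : h * (2 * L ^ 2 * ∑ j, w j ^ 2) ≤ (2 * L) ^ 2 * PnormSq N h w := by
      rw [PnormSq]
      have h5 : ∑ j, (1/2 : ℝ) * w j ^ 2 ≤ ∑ j : Fin N,
          (if (j : ℕ) = 0 ∨ (j : ℕ) = N - 1 then (1/2 : ℝ) else 1) * w j ^ 2 := by
        apply Finset.sum_le_sum
        intro j _
        by_cases hj : (j : ℕ) = 0 ∨ (j : ℕ) = N - 1 <;>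
          simp [hj] <;> nlinarith [sq_nonneg (w j)]
      have h6 : ∑ j, (1/2 : ℝ) * w j ^ 2 = (1/2) * ∑ j, w j ^ 2 := by
        rw [Finset.mul_sum]
      rw [h6] at h5
      have h4 : 2 * L ^ 2 * ∑ j, w j ^ 2
          ≤ (2 * L) ^ 2 * ∑ j : Fin N,
            (if (j : ℕ) = 0 ∨ (j : ℕ) = N - 1 then (1/2 : ℝ) else 1) * w j ^ 2 := by
        nlinarith [sq_nonneg L]
      calc h * (2 * L ^ 2 * ∑ j, w j ^ 2) ≤ h * ((2 * L) ^ 2 * _) :=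
            mul_le_mul_of_nonneg_left h4 hh.le
        _ = (2 * L) ^ 2 * (h * _) := by ring
    linarith
  calc Real.sqrt (PnormSq N h
        (fun j => Dop N hN h (fun k => u k * w k) j - u j * Dop N hN h w j))
      ≤ Real.sqrt ((2 * L) ^ 2 * PnormSq N h w) := Real.sqrt_le_sqrt hPc
    _ = 2 * L * Real.sqrt (PnormSq N h w) := by
        rw [Real.sqrt_mul (sq_nonneg _), Real.sqrt_sq (by positivity : (0:ℝ) ≤ 2 * L)]
end
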